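/- arXiv:1007.0878 — 5 statements merged into one kernel-verified Lean document; each statement's English description precedes it below -/
import Mathlib

section
/- Let p be a prime and A = Σ_{i=0}^r a_i p^i, B = Σ_{i=0}^r b_i p^i with digits a_i, b_i ∈ {0,...,p-1}, and write A + B = Σ_{i=0}^{r+1} c_i p^i with c_i ∈ {0,...,p-1}. Then c_0 ≡ a_0 + b_0 (mod p), and for 1 ≤ t ≤ r+1: c_t ≡ a_t + b_t + Σ_{i=0}^{t-1} (Σ_{k=1}^{p-1} C(a_i, k) · C(b_i, p-k)) · Π_{j=i+1}^{t-1} C(a_j + b_j, p-1) (mod p). -/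
/-!
Let `d t` be the carry into position `t`, so that `c t ≡ a t + b t + d t`. Since `d t ∈ {0, 1}`,
Lucas' theorem gives
`d (t + 1) = ⌊(a t + b t + d t) / p⌋ ≡ C(a t + b t, p) + C(a t + b t, p - 1) * d t` modulo `p`,
and for digits `a t, b t < p` Vandermonde's identity turns `C(a t + b t, p)` into
`∑ k ∈ [1, p - 1], C(a t, k) * C(b t, p - k)`. Unrolling this linear recurrence from `d 0 = 0`
gives the formula.
-/

open Finset

theorem Nat.sum_Icc_choose_mul_choose_sub {p a b : ℕ} (ha : a < p) (hb : b < p) :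
    ∑ k ∈ Icc 1 (p - 1), a.choose k * b.choose (p - k) = (a + b).choose p := by
  rw [Nat.add_choose_eq, Nat.sum_antidiagonal_eq_sum_range_succ_mk]
  refine sum_subset (fun k hk => ?_) (fun k hk hk' => ?_)
  · simp only [mem_Icc] at hk
    simp only [mem_range]
    omega
  · simp only [mem_range] at hk
    simp only [mem_Icc, not_and, not_le] at hk'
    obtain rfl | rfl : k = 0 ∨ k = p := by omega
    · simp [Nat.choose_eq_zero_of_lt hb]
    · simp [Nat.choose_eq_zero_of_lt ha]

section Lucas

variable {p : ℕ} [Fact p.Prime]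

theorem ZMod.natCast_choose_prime (n : ℕ) : (n.choose p : ZMod p) = (n / p : ℕ) := by
  rw [(ZMod.natCast_eq_natCast_iff _ _ _).mpr Choose.choose_modEq_choose_mod_mul_choose_div_nat]
  simp [Nat.div_self (Fact.out : p.Prime).pos]

theorem ZMod.natCast_choose_sub_one (n : ℕ) :
    (n.choose (p - 1) : ZMod p) = if n % p = p - 1 then 1 else 0 := by
  have hp := (Fact.out : p.Prime).pos
  rw [(ZMod.natCast_eq_natCast_iff _ _ _).mpr Choose.choose_modEq_choose_mod_mul_choose_div_nat,
    Nat.mod_eq_of_lt (by omega : p - 1 < p), Nat.div_eq_of_lt (by omega : p - 1 < p),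
    Nat.choose_zero_right, mul_one]
  split_ifs with h
  · rw [h, Nat.choose_self, Nat.cast_one]
  · rw [Nat.choose_eq_zero_of_lt (by have := n.mod_lt hp; omega), Nat.cast_zero]

theorem ZMod.natCast_add_div_of_le_one (n : ℕ) {d : ℕ} (hd : d ≤ 1) :
    ((n + d) / p : ℕ) = (n.choose p : ZMod p) + n.choose (p - 1) * d := by
  have hp := (Fact.out : p.Prime).two_le
  have hn := n.mod_lt (by omega : 0 < p)
  rw [Nat.add_div (by omega), Nat.div_eq_of_lt (by omega : d < p),
    Nat.mod_eq_of_lt (by omega : d < p), natCast_choose_prime, natCast_choose_sub_one]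
  obtain rfl | rfl : d = 0 ∨ d = 1 := by omega
  all_goals split_ifs <;> first | omega | simp

end Lucas

theorem eq_sum_mul_prod_Ico_of_succ_eq {R : Type*} [CommSemiring R] {x g h : ℕ → R} {n : ℕ}
    (h0 : x 0 = 0) (hs : ∀ t < n, x (t + 1) = g t + h t * x t) :
    x n = ∑ i ∈ range n, g i * ∏ j ∈ Ico (i + 1) n, h j := by
  induction n with
  | zero => simpa
  | succ n ih =>
    rw [hs n n.lt_succ_self, ih fun t ht => hs t (by omega), sum_range_succ, Ico_self,
      prod_empty, mul_one, mul_sum, add_comm]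
    congr 1
    refine sum_congr rfl fun i hi => ?_
    rw [prod_Ico_succ_top (by simp only [mem_range] at hi; omega)]
    ring

theorem eq_of_sum_mul_pow_eq {p n : ℕ} {f g : ℕ → ℕ} (hf : ∀ i < n, f i < p)
    (hg : ∀ i < n, g i < p) (h : ∑ i ∈ range n, f i * p ^ i = ∑ i ∈ range n, g i * p ^ i) :
    ∀ i < n, f i = g i := by
  induction n generalizing f g with
  | zero => simp
  | succ n ih =>
    have hsplit (f : ℕ → ℕ) :
        ∑ i ∈ range (n + 1), f i * p ^ i = f 0 + p * ∑ i ∈ range n, f (i + 1) * p ^ i := by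
      rw [sum_range_succ', mul_sum, pow_zero, mul_one, add_comm]
      exact congrArg (f 0 + ·) (sum_congr rfl fun i _ => by ring)
    have hp : 0 < p := (hf 0 n.succ_pos).pos
    rw [hsplit f, hsplit g] at h
    have h0 : f 0 = g 0 := by
      simpa [Nat.add_mul_mod_self_left, Nat.mod_eq_of_lt (hf 0 n.succ_pos),
        Nat.mod_eq_of_lt (hg 0 n.succ_pos)] using congrArg (· % p) h
    have htail := ih (f := fun i => f (i + 1)) (g := fun i => g (i + 1))
      (fun i hi => hf _ (by omega)) (fun i hi => hg _ (by omega))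
      (Nat.eq_of_mul_eq_mul_left hp (by omega))
    rintro (_ | i) hi
    · exact h0
    · exact htail i (by omega)

/-- The carry into position `i` when the base-`p` digit sequences `a` and `b` are added. -/
def addCarry (p : ℕ) (a b : ℕ → ℕ) : ℕ → ℕ
  | 0 => 0
  | i + 1 => (a i + b i + addCarry p a b i) / p

section addCarry

variable {p : ℕ} {a b : ℕ → ℕ}

theorem addCarry_le_one {n : ℕ} (ha : ∀ i < n, a i < p) (hb : ∀ i < n, b i < p) :
    addCarry p a b n ≤ 1 := by
  induction n with
  | zero => simp [addCarry]
  | succ n ih =>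
    have := ih (fun i hi => ha i (by omega)) (fun i hi => hb i (by omega))
    have := ha n n.lt_succ_self
    have := hb n n.lt_succ_self
    exact Nat.le_of_lt_succ (Nat.div_lt_of_lt_mul (by omega))

theorem sum_add_sum_eq_sum_mod_add_addCarry (n : ℕ) :
    ∑ i ∈ range n, a i * p ^ i + ∑ i ∈ range n, b i * p ^ i =
      ∑ i ∈ range n, (a i + b i + addCarry p a b i) % p * p ^ i + addCarry p a b n * p ^ n := by
  induction n with
  | zero => simp [addCarry]
  | succ n ih =>
    have hdigit := Nat.mod_add_div (a n + b n + addCarry p a b n) p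
    simp only [sum_range_succ, addCarry] at ih ⊢
    have key := congrArg (· * p ^ n) hdigit
    rw [pow_succ]
    linarith

theorem eq_mod_of_sum_add_sum_eq {n : ℕ} {c : ℕ → ℕ} (hp : 0 < p) (hc : ∀ i < n, c i < p)
    (htop : addCarry p a b n = 0)
    (h : ∑ i ∈ range n, a i * p ^ i + ∑ i ∈ range n, b i * p ^ i = ∑ i ∈ range n, c i * p ^ i) :
    ∀ i < n, c i = (a i + b i + addCarry p a b i) % p :=
  eq_of_sum_mul_pow_eq hc (fun _ _ => Nat.mod_lt _ hp) <| by
    rw [← h, sum_add_sum_eq_sum_mod_add_addCarry, htop, zero_mul, add_zero]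

theorem natCast_addCarry_succ (hp : p.Prime) {i : ℕ} (ha : a i < p) (hb : b i < p)
    (hd : addCarry p a b i ≤ 1) :
    (addCarry p a b (i + 1) : ZMod p) =
      ∑ k ∈ Icc 1 (p - 1), (a i).choose k * ((b i).choose (p - k) : ZMod p) +
        (a i + b i).choose (p - 1) * addCarry p a b i := by
  have := Fact.mk hp
  rw [addCarry, ZMod.natCast_add_div_of_le_one _ hd, ← Nat.sum_Icc_choose_mul_choose_sub ha hb]
  push_cast
  rfl

end addCarry

theorem addition_digit_formula_general (p : ℕ) (hp : p.Prime) (r : ℕ)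
    (a b c : ℕ → ℕ)
    (ha : ∀ i ≤ r, a i < p) (hb : ∀ i ≤ r, b i < p) (hc : ∀ i ≤ r + 1, c i < p)
    (har : a (r + 1) = 0) (hbr : b (r + 1) = 0)
    (hsum : (∑ i ∈ Finset.range (r + 1), a i * p ^ i) +
        (∑ i ∈ Finset.range (r + 1), b i * p ^ i) =
        ∑ i ∈ Finset.range (r + 2), c i * p ^ i) :
    (c 0 : ZMod p) = a 0 + b 0 ∧
    ∀ t, 1 ≤ t → t ≤ r + 1 →
      (c t : ZMod p) = a t + b t +
        ∑ i ∈ Finset.range t,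
          (∑ k ∈ Finset.Icc 1 (p - 1),
            ((Nat.choose (a i) k : ZMod p) * (Nat.choose (b i) (p - k) : ZMod p))) *
          ∏ j ∈ Finset.Icc (i + 1) (t - 1), (Nat.choose (a j + b j) (p - 1) : ZMod p) := by
  have hd (t) (ht : t ≤ r + 1) : addCarry p a b t ≤ 1 :=
    addCarry_le_one (fun i hi => ha i (by omega)) (fun i hi => hb i (by omega))
  have htop : addCarry p a b (r + 2) = 0 := by
    rw [addCarry, har, hbr, zero_add, zero_add,
      Nat.div_eq_of_lt (by linarith [hd _ le_rfl, hp.two_le])]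
  have hsum' : ∑ i ∈ range (r + 2), a i * p ^ i + ∑ i ∈ range (r + 2), b i * p ^ i =
      ∑ i ∈ range (r + 2), c i * p ^ i := by
    rwa [sum_range_succ _ (r + 1), sum_range_succ _ (r + 1), har, hbr, zero_mul, add_zero,
      add_zero]
  have hc_cast (t) (ht : t ≤ r + 1) : (c t : ZMod p) = a t + b t + addCarry p a b t := by
    rw [eq_mod_of_sum_add_sum_eq hp.pos (fun i hi => hc i (by omega)) htop hsum' t (by omega),
      ZMod.natCast_mod]
    push_cast
    ring
  refine ⟨by simpa [addCarry] using hc_cast 0 (by omega), fun t ht1 ht2 => ?_⟩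
  rw [hc_cast t ht2, eq_sum_mul_prod_Ico_of_succ_eq (x := fun t => (addCarry p a b t : ZMod p))
    (by simp [addCarry]) fun s hs =>
      natCast_addCarry_succ hp (ha s (by omega)) (hb s (by omega)) (hd s (by omega))]
  simp only [Icc_sub_one_right_eq_Ico_of_not_isMin (b := t) (by simpa using (by omega : t ≠ 0))]

/-- Addition formula for base-p digits. -/
theorem addition_digit_formula (p : ℕ) (hp : p.Prime) (r : ℕ) (hr : 1 ≤ r)
    (a b c : ℕ → ℕ)
    (ha : ∀ i ≤ r, a i < p) (hb : ∀ i ≤ r, b i < p) (hc : ∀ i ≤ r + 1, c i < p)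
    (har : a (r + 1) = 0) (hbr : b (r + 1) = 0)
    (hsum : (∑ i ∈ Finset.range (r + 1), a i * p ^ i) +
        (∑ i ∈ Finset.range (r + 1), b i * p ^ i) =
        ∑ i ∈ Finset.range (r + 2), c i * p ^ i) :
    (c 0 : ZMod p) = a 0 + b 0 ∧
    ∀ t, 1 ≤ t → t ≤ r + 1 →
      (c t : ZMod p) = a t + b t +
        ∑ i ∈ Finset.range t,
          (∑ k ∈ Finset.Icc 1 (p - 1),
            ((Nat.choose (a i) k : ZMod p) * (Nat.choose (b i) (p - k) : ZMod p))) *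
          ∏ j ∈ Finset.Icc (i + 1) (t - 1), (Nat.choose (a j + b j) (p - 1) : ZMod p) :=
  addition_digit_formula_general p hp r a b c ha hb hc har hbr hsum
end

section
/- Let a = Σ_{i=0}^∞ a_i 2^i be a 2-adic integer and n ≥ 1. Write (2^n + 1)·a = Σ_{i=0}^∞ c_i 2^i with digits in {0,1}. Then c_t = a_t for 0 ≤ t ≤ n-1, c_n ≡ a_n + a_0 (mod 2), and for t ≥ n+1: c_t ≡ a_t + a_{t-n} + Σ_{i=n}^{t-1} a_i a_{i-n} · Π_{j=i+1}^{t-1} (a_j + a_{j-n}) (mod 2). -/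
/-!
Write `(2^n + 1) a = a + 2^n a` and add the digit sequences `a_t` and `a_{t-n}` (the latter
zero below `n`) column by column. Digit `t` of the sum is `a_t + a_{t-n} + e_t mod 2`, and the carry
`e_{t+1}`, the majority of `a_t, a_{t-n}, e_t`, is `a_t a_{t-n} + e_t (a_t + a_{t-n}) mod 2`;
unrolling this recursion from `e_n = 0` gives the sum of products. The finite column-addition
identities pass to the limit in `ℤ₂` because `2^k → 0`, and base-`p` expansions in `ℤ_p` are unique,
so these digits are the `c_t`.
-/

open Finset Filter Topology

namespace PadicInt

variable {p : ℕ} [Fact p.Prime]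

theorem tendsto_natCast_mul_pow_atTop_zero (b : ℕ → ℕ) :
    Tendsto (fun k => (b k : ℤ_[p]) * (p : ℤ_[p]) ^ k) atTop (𝓝 0) := by
  have hp : ‖(p : ℤ_[p])‖ < 1 := by
    rw [norm_p]; exact inv_lt_one_of_one_lt₀ (mod_cast (Fact.out : p.Prime).one_lt)
  refine squeeze_zero_norm (fun k => ?_)
    (tendsto_zero_iff_norm_tendsto_zero.1 (tendsto_pow_atTop_nhds_zero_of_norm_lt_one hp))
  rw [norm_mul]
  exact mul_le_of_le_one_left (norm_nonneg _) (norm_le_one _)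

theorem summable_natCast_mul_pow (b : ℕ → ℕ) :
    Summable fun i => (b i : ℤ_[p]) * (p : ℤ_[p]) ^ i :=
  NonarchimedeanAddGroup.summable_of_tendsto_cofinite_zero <| by
    simpa only [Nat.cofinite_eq_atTop] using tendsto_natCast_mul_pow_atTop_zero b

theorem tsum_natCast_mul_pow_eq_add (b : ℕ → ℕ) :
    ∑' i, (b i : ℤ_[p]) * (p : ℤ_[p]) ^ i
      = b 0 + p * ∑' i, (b (i + 1) : ℤ_[p]) * (p : ℤ_[p]) ^ i := by
  rw [(summable_natCast_mul_pow b).tsum_eq_zero_add,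
    ← (summable_natCast_mul_pow (fun i => b (i + 1))).tsum_mul_left]
  simp only [pow_zero, mul_one, pow_succ]
  congr 1
  exact tsum_congr fun i => by ring

theorem head_eq_and_tsum_tail_eq_of_tsum_digits_eq {b c : ℕ → ℕ} (hb : ∀ i, b i < p)
    (hc : ∀ i, c i < p)
    (h : ∑' i, (b i : ℤ_[p]) * (p : ℤ_[p]) ^ i = ∑' i, (c i : ℤ_[p]) * (p : ℤ_[p]) ^ i) :
    b 0 = c 0 ∧ ∑' i, (b (i + 1) : ℤ_[p]) * (p : ℤ_[p]) ^ i
      = ∑' i, (c (i + 1) : ℤ_[p]) * (p : ℤ_[p]) ^ i := by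
  rw [tsum_natCast_mul_pow_eq_add b, tsum_natCast_mul_pow_eq_add c] at h
  have h0 : b 0 = c 0 := by
    have := congrArg toZMod h
    simp only [map_add, map_mul, map_natCast, ZMod.natCast_self, zero_mul, add_zero,
      ZMod.natCast_eq_natCast_iff' _ _ p, Nat.mod_eq_of_lt (hb 0), Nat.mod_eq_of_lt (hc 0)] at this
    exact this
  rw [h0, add_right_inj] at h
  exact ⟨h0, mul_left_cancel₀ (Nat.cast_ne_zero.2 (Fact.out : p.Prime).ne_zero) h⟩

theorem eq_of_tsum_digits_eq {b c : ℕ → ℕ} (hb : ∀ i, b i < p) (hc : ∀ i, c i < p)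
    (h : ∑' i, (b i : ℤ_[p]) * (p : ℤ_[p]) ^ i = ∑' i, (c i : ℤ_[p]) * (p : ℤ_[p]) ^ i) :
    b = c := by
  funext t
  induction t generalizing b c with
  | zero => exact (head_eq_and_tsum_tail_eq_of_tsum_digits_eq hb hc h).1
  | succ t ih =>
    exact ih (fun i => hb (i + 1)) (fun i => hc (i + 1))
      (head_eq_and_tsum_tail_eq_of_tsum_digits_eq hb hc h).2

end PadicInt

def shiftDigits (n : ℕ) (b : ℕ → ℕ) (t : ℕ) : ℕ := if n ≤ t then b (t - n) else 0

theorem shiftDigits_of_le {n t : ℕ} (b : ℕ → ℕ) (h : n ≤ t) : shiftDigits n b t = b (t - n) :=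
  if_pos h

theorem shiftDigits_of_lt {n t : ℕ} (b : ℕ → ℕ) (h : t < n) : shiftDigits n b t = 0 :=
  if_neg (not_le.2 h)

theorem shiftDigits_lt {m n : ℕ} {b : ℕ → ℕ} (hb : ∀ i, b i < m) (t : ℕ) :
    shiftDigits n b t < m := by
  unfold shiftDigits
  split
  · exact hb _
  · exact (Nat.zero_le _).trans_lt (hb 0)

theorem PadicInt.tsum_shiftDigits {p : ℕ} [Fact p.Prime] (n : ℕ) (b : ℕ → ℕ) :
    ∑' i, (shiftDigits n b i : ℤ_[p]) * (p : ℤ_[p]) ^ i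
      = p ^ n * ∑' i, (b i : ℤ_[p]) * (p : ℤ_[p]) ^ i := by
  rw [← (summable_natCast_mul_pow _).sum_add_tsum_nat_add n,
    sum_eq_zero fun i hi => by rw [shiftDigits_of_lt b (mem_range.1 hi), Nat.cast_zero, zero_mul],
    zero_add, ← (summable_natCast_mul_pow b).tsum_mul_left]
  refine tsum_congr fun i => ?_
  rw [shiftDigits_of_le b (Nat.le_add_left n i), Nat.add_sub_cancel, pow_add]
  ring

namespace BinaryAddition

variable (x y : ℕ → ℕ)

def carry : ℕ → ℕ
  | 0 => 0
  | t + 1 => (x t + y t + carry t) / 2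

def digit (t : ℕ) : ℕ := (x t + y t + carry x y t) % 2

theorem digit_lt_two (t : ℕ) : digit x y t < 2 := Nat.mod_lt _ two_pos

theorem sum_range_add_sum_range (k : ℕ) :
    ∑ i ∈ range k, x i * 2 ^ i + ∑ i ∈ range k, y i * 2 ^ i
      = ∑ i ∈ range k, digit x y i * 2 ^ i + carry x y k * 2 ^ k := by
  induction k with
  | zero => simp [carry]
  | succ k ih =>
    have hdiv := Nat.mod_add_div (x k + y k + carry x y k) 2
    simp only [sum_range_succ, carry, digit, pow_succ] at ih hdiv ⊢
    linear_combination ih + 2 ^ k * hdiv.symm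

variable {x y}

theorem carry_le_one (hx : ∀ i, x i < 2) (hy : ∀ i, y i < 2) (t : ℕ) : carry x y t ≤ 1 := by
  induction t with
  | zero => exact zero_le_one
  | succ t ih => have := hx t; have := hy t; simp only [carry]; omega

theorem carry_eq_zero_of_le {m : ℕ} (hx : ∀ i, x i < 2) (hy : ∀ i < m, y i = 0) {t : ℕ}
    (ht : t ≤ m) : carry x y t = 0 := by
  induction t with
  | zero => rfl
  | succ t ih =>
    have := hx t
    simp only [carry, hy t (by omega), ih (by omega)]
    omega

theorem natCast_digit (t : ℕ) : (digit x y t : ZMod 2) = x t + y t + carry x y t := by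
  rw [digit, ZMod.natCast_mod]
  push_cast
  rfl

theorem natCast_carry_succ (hx : ∀ i, x i < 2) (hy : ∀ i, y i < 2) (t : ℕ) :
    (carry x y (t + 1) : ZMod 2) = x t * y t + carry x y t * (x t + y t) := by
  have hmaj : ∀ u < 2, ∀ v < 2, ∀ e < 2,
      (((u + v + e) / 2 : ℕ) : ZMod 2) = u * v + e * (u + v) := by
    decide
  exact hmaj _ (hx t) _ (hy t) _ (Nat.lt_succ_of_le (carry_le_one hx hy t))

theorem natCast_carry (hx : ∀ i, x i < 2) (hy : ∀ i, y i < 2) (t : ℕ) :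
    (carry x y t : ZMod 2)
      = ∑ i ∈ range t, (x i : ZMod 2) * y i * ∏ j ∈ Ico (i + 1) t, ((x j : ZMod 2) + y j) := by
  induction t with
  | zero => simp [carry]
  | succ t ih =>
    rw [natCast_carry_succ hx hy, ih, sum_range_succ, Ico_self, prod_empty, mul_one, sum_mul,
      add_comm]
    congr 1
    refine sum_congr rfl fun i hi => ?_
    rw [prod_Ico_succ_top (mem_range.1 hi), mul_assoc]

variable (x y) in
theorem tsum_add_tsum :
    ∑' i, (x i : ℤ_[2]) * 2 ^ i + ∑' i, (y i : ℤ_[2]) * 2 ^ i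
      = ∑' i, (digit x y i : ℤ_[2]) * 2 ^ i := by
  have hsum (b : ℕ → ℕ) : Summable fun i => (b i : ℤ_[2]) * 2 ^ i := by
    simpa only [Nat.cast_ofNat] using PadicInt.summable_natCast_mul_pow (p := 2) b
  have hcarry : Tendsto (fun k => (carry x y k : ℤ_[2]) * 2 ^ k) atTop (𝓝 0) := by
    simpa only [Nat.cast_ofNat] using
      PadicInt.tendsto_natCast_mul_pow_atTop_zero (p := 2) (carry x y)
  have hpartial (k : ℕ) : ∑ i ∈ range k, (digit x y i : ℤ_[2]) * 2 ^ i
      = ∑ i ∈ range k, (x i : ℤ_[2]) * 2 ^ i + ∑ i ∈ range k, (y i : ℤ_[2]) * 2 ^ i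
        - carry x y k * 2 ^ k := by
    rw [eq_sub_iff_add_eq]
    exact_mod_cast (sum_range_add_sum_range x y k).symm
  refine tendsto_nhds_unique ?_ (hsum _).hasSum.tendsto_sum_nat
  simpa only [hpartial, sub_zero] using
    ((hsum x).hasSum.tendsto_sum_nat.add (hsum y).hasSum.tendsto_sum_nat).sub hcarry

theorem natCast_carry_shiftDigits {n : ℕ} {a : ℕ → ℕ} (ha : ∀ i, a i < 2) {t : ℕ} (ht : n ≤ t) :
    (carry a (shiftDigits n a) t : ZMod 2)
      = ∑ i ∈ Ico n t, (a i : ZMod 2) * a (i - n) *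
          ∏ j ∈ Ico (i + 1) t, ((a j : ZMod 2) + a (j - n)) := by
  rw [natCast_carry ha (shiftDigits_lt ha), ← sum_range_add_sum_Ico _ ht,
    sum_eq_zero fun i hi => by rw [shiftDigits_of_lt a (mem_range.1 hi)]; simp, zero_add]
  refine sum_congr rfl fun i hi => ?_
  rw [shiftDigits_of_le a (mem_Ico.1 hi).1]
  refine congrArg _ (prod_congr rfl fun j hj => ?_)
  rw [shiftDigits_of_le a (by grind)]

end BinaryAddition

open BinaryAddition in
/-- Digits of `(2^n + 1) * a` for a 2-adic integer `a`. -/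
theorem two_adic_mul_two_pow_add_one_digits (n : ℕ) (hn : 1 ≤ n) (a c : ℕ → ℕ)
    (ha : ∀ i, a i < 2) (hc : ∀ i, c i < 2)
    (hmul : ((2 : ℤ_[2]) ^ n + 1) * (∑' i : ℕ, (a i : ℤ_[2]) * 2 ^ i)
        = ∑' i : ℕ, (c i : ℤ_[2]) * 2 ^ i) :
    (∀ t, t ≤ n - 1 → c t = a t) ∧
    (c n : ZMod 2) = a n + a 0 ∧
    ∀ t, n + 1 ≤ t →
      (c t : ZMod 2) = a t + a (t - n) +
        ∑ i ∈ Finset.Icc n (t - 1),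
          (a i : ZMod 2) * a (i - n) *
            ∏ j ∈ Finset.Icc (i + 1) (t - 1), ((a j : ZMod 2) + a (j - n)) := by
  have hc_eq : c = digit a (shiftDigits n a) := by
    refine PadicInt.eq_of_tsum_digits_eq (p := 2) hc (digit_lt_two _ _) ?_
    have hshift := PadicInt.tsum_shiftDigits (p := 2) n a
    simp only [Nat.cast_ofNat] at hshift ⊢
    rw [← tsum_add_tsum, ← hmul, hshift]
    ring
  have hhigh (t : ℕ) (ht : n ≤ t) : (c t : ZMod 2) = a t + a (t - n) +
      ∑ i ∈ Ico n t, (a i : ZMod 2) * a (i - n) *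
        ∏ j ∈ Ico (i + 1) t, ((a j : ZMod 2) + a (j - n)) := by
    rw [hc_eq, natCast_digit, shiftDigits_of_le a ht, natCast_carry_shiftDigits ha ht]
  refine ⟨fun t ht => ?_, by simpa using hhigh n le_rfl, fun t ht => ?_⟩
  · have hcarry : carry a (shiftDigits n a) t = 0 :=
      carry_eq_zero_of_le ha (fun i hi => shiftDigits_of_lt a hi) (by omega : t ≤ n)
    rw [hc_eq, digit, shiftDigits_of_lt a (by omega), hcarry, add_zero, add_zero,
      Nat.mod_eq_of_lt (ha t)]
  · obtain ⟨s, rfl⟩ : ∃ s, t = s + 1 := ⟨t - 1, by omega⟩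
    simpa only [Nat.add_sub_cancel, Ico_add_one_right_eq_Icc] using hhigh (s + 1) (by omega)
end

section
/- Let a = Σ_{i=0}^∞ a_i 3^i be a 3-adic integer with digits a_i ∈ {0,1,2}, and write 2a = Σ_{i=0}^∞ c_i 3^i with digits c_i ∈ {0,1,2}. Then c_0 ≡ -a_0 (mod 3) and for t ≥ 1: c_t ≡ -a_t + Σ_{i=0}^{t-1} a_i(1 - a_i) · Π_{j=i+1}^{t-1} a_j(2a_j - 1) (mod 3). -/
/-!
Doubling `a` digit by digit produces carries `e_n ∈ {0, 1}` with `e_0 = 0` and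
`2 a_n + e_n = c_n + 3 e_{n+1}`; these are read off from the congruences
`2 ∑_{i<n} a_i 3^i ≡ ∑_{i<n} c_i 3^i (mod 3^n)` obtained by reducing the 3-adic identity
modulo `3^n`. Modulo 3 this gives `c_n = -a_n + e_n`, and the carry obeys the affine
recurrence `e_{n+1} = a_n(1 - a_n) + a_n(2a_n - 1) e_n`, whose solution is the stated sum.
-/
open Finset

namespace PadicInt

variable {p : ℕ} [Fact p.Prime]

theorem summable_mul_pow (x : ℕ → ℤ_[p]) : Summable fun i => x i * (p : ℤ_[p]) ^ i := by
  refine NonarchimedeanAddGroup.summable_of_tendsto_cofinite_zero ?_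
  rw [Nat.cofinite_eq_atTop]
  refine squeeze_zero_norm (fun i => ?_)
    (tendsto_pow_atTop_nhds_zero_of_lt_one (norm_nonneg _)
      (norm_natCast_lt_one_iff (p := p).mpr dvd_rfl))
  rw [norm_mul, norm_pow]
  exact mul_le_of_le_one_left (by positivity) (norm_le_one _)

theorem toZModPow_tsum_mul_pow (x : ℕ → ℤ_[p]) (n : ℕ) :
    toZModPow n (∑' i, x i * (p : ℤ_[p]) ^ i) =
      ∑ i ∈ range n, toZModPow n (x i) * (p : ZMod (p ^ n)) ^ i := by
  have htail : ∑' i, x (i + n) * (p : ℤ_[p]) ^ (i + n) =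
      p ^ n * ∑' i, x (i + n) * (p : ℤ_[p]) ^ i := by
    rw [← (summable_mul_pow _).tsum_mul_left]
    exact tsum_congr fun i => by ring
  rw [← (summable_mul_pow x).sum_add_tsum_nat_add n, htail]
  have hpn : (p : ZMod (p ^ n)) ^ n = 0 := by exact_mod_cast ZMod.natCast_self (p ^ n)
  simp [hpn]

theorem natCast_mul_sum_modEq_of_tsum_eq {m : ℕ} {a c : ℕ → ℕ}
    (h : (m : ℤ_[p]) * ∑' i, (a i : ℤ_[p]) * (p : ℤ_[p]) ^ i =
      ∑' i, (c i : ℤ_[p]) * (p : ℤ_[p]) ^ i)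
    (n : ℕ) :
    m * ∑ i ∈ range n, a i * p ^ i ≡ ∑ i ∈ range n, c i * p ^ i [MOD p ^ n] := by
  rw [← ZMod.natCast_eq_natCast_iff]
  have h' := congrArg (toZModPow n) h
  rw [map_mul, toZModPow_tsum_mul_pow, toZModPow_tsum_mul_pow] at h'
  push_cast
  simpa using h'

end PadicInt

namespace Nat

theorem sum_range_mul_pow_lt {b : ℕ} {c : ℕ → ℕ} (hc : ∀ i, c i < b) (n : ℕ) :
    ∑ i ∈ range n, c i * b ^ i < b ^ n := by
  induction n with
  | zero => simp
  | succ n ih =>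
    calc ∑ i ∈ range (n + 1), c i * b ^ i < b ^ n + c n * b ^ n := by
          rw [sum_range_succ]; omega
      _ = (c n + 1) * b ^ n := by ring
      _ ≤ b ^ (n + 1) := by rw [pow_succ']; exact Nat.mul_le_mul_right _ (hc n)

theorem exists_carries {b m : ℕ} {a c : ℕ → ℕ} (hc : ∀ i, c i < b)
    (hmod : ∀ n, m * ∑ i ∈ range n, a i * b ^ i ≡
      ∑ i ∈ range n, c i * b ^ i [MOD b ^ n]) :
    ∃ e : ℕ → ℕ, e 0 = 0 ∧ ∀ n, m * a n + e n = c n + b * e (n + 1) := by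
  set A : ℕ → ℕ := fun n => ∑ i ∈ range n, a i * b ^ i
  set C : ℕ → ℕ := fun n => ∑ i ∈ range n, c i * b ^ i
  obtain ⟨e, he⟩ : ∃ e : ℕ → ℕ, ∀ n, m * A n = C n + b ^ n * e n := by
    refine ⟨fun n => m * A n / b ^ n, fun n => ?_⟩
    conv_lhs => rw [← Nat.mod_add_div (m * A n) (b ^ n)]
    rw [hmod n, Nat.mod_eq_of_lt (sum_range_mul_pow_lt hc n)]
  refine ⟨e, by simpa [A, C] using (he 0).symm, fun n => ?_⟩
  have hn := he n
  have hn1 := he (n + 1)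
  have hA1 : A (n + 1) = A n + a n * b ^ n := sum_range_succ _ _
  have hC1 : C (n + 1) = C n + c n * b ^ n := sum_range_succ _ _
  rw [hA1, hC1, pow_succ] at hn1
  refine Nat.eq_of_mul_eq_mul_left (pow_pos (Nat.zero_lt_of_lt (hc 0)) n) ?_
  linarith

end Nat

/-- The polynomial takes the values `0`, `e`, `1` at `a = 0, 1, 2`, the carry out of the digit. -/
theorem carry_succ_zmod_three {a c e e' : ℕ} (ha : a < 3) (hc : c < 3) (he : e ≤ 1)
    (h : 2 * a + e = c + 3 * e') :
    (e' : ZMod 3) = a * (1 - a) + a * (2 * a - 1) * e := by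
  obtain rfl : e' = (2 * a + e) / 3 := by omega
  interval_cases a <;> interval_cases e <;> decide

theorem digit_zmod_three {a c e e' : ℕ} (h : 2 * a + e = c + 3 * e') :
    (c : ZMod 3) = -a + e := by
  have h' := congrArg (Nat.cast : ℕ → ZMod 3) h
  push_cast at h'
  have h3 : (3 : ZMod 3) = 0 := rfl
  linear_combination -h' + (a - e') * h3

theorem eq_sum_mul_prod_Ico_of_eq_add_mul {R : Type*} [CommSemiring R] {x f g : ℕ → R}
    (h0 : x 0 = 0) (hx : ∀ n, x (n + 1) = f n + g n * x n) (t : ℕ) :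
    x t = ∑ i ∈ range t, f i * ∏ j ∈ Ico (i + 1) t, g j := by
  induction t with
  | zero => simp [h0]
  | succ t ih =>
    rw [hx, ih, sum_range_succ, Ico_self, prod_empty, mul_one, mul_sum, add_comm]
    congr 1
    refine sum_congr rfl fun i hi => ?_
    rw [prod_Ico_succ_top (by simpa using hi)]
    ring

/-- Digits of `2 * a` for a 3-adic integer `a`. -/
theorem three_adic_double_digits (a c : ℕ → ℕ)
    (ha : ∀ i, a i < 3) (hc : ∀ i, c i < 3)
    (hmul : (2 : ℤ_[3]) * (∑' i : ℕ, (a i : ℤ_[3]) * 3 ^ i)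
        = ∑' i : ℕ, (c i : ℤ_[3]) * 3 ^ i) :
    (c 0 : ZMod 3) = -(a 0) ∧
    ∀ t, 1 ≤ t →
      (c t : ZMod 3) = -(a t) +
        ∑ i ∈ Finset.range t,
          (a i : ZMod 3) * (1 - (a i : ZMod 3)) *
            ∏ j ∈ Finset.Icc (i + 1) (t - 1), (a j : ZMod 3) * (2 * (a j : ZMod 3) - 1) := by
  obtain ⟨e, he0, hstep⟩ := Nat.exists_carries hc
    (PadicInt.natCast_mul_sum_modEq_of_tsum_eq (m := 2) (by exact_mod_cast hmul))
  have he : ∀ n, e n ≤ 1 := fun n => by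
    induction n with
    | zero => simp [he0]
    | succ n ih => have := hstep n; have := ha n; omega
  have hdigit : ∀ t, (c t : ZMod 3) = -a t + e t := fun t => digit_zmod_three (hstep t)
  have hcarry := eq_sum_mul_prod_Ico_of_eq_add_mul (x := fun n => (e n : ZMod 3))
    (by simp [he0]) fun n => carry_succ_zmod_three (ha n) (hc n) (he n) (hstep n)
  refine ⟨by simp [hdigit, he0], fun t ht => ?_⟩
  obtain ⟨s, rfl⟩ : ∃ s, t = s + 1 := ⟨t - 1, by omega⟩
  rw [hdigit, hcarry, Nat.add_sub_cancel]
  simp only [Ico_add_one_right_eq_Icc]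
end

section
/- For an odd prime p and a tuple (a_0,...,a_{t-1}) with each a_i ∈ {0,±1,...,±(p-1)/2}, the polynomial f_t(a_0,...,a_{t-1}) = Σ_{λ=0}^{t-1} (Σ_{c=1}^{(p-1)/2} [(a_λ + c)^{p-1} - 1]) · Π_{λ < i < t} (1 - a_i^{p-1}) satisfies: f_t ≡ -1 (mod p) if (a_0,...,a_{t-1}) has the form (*,...,*, -c, 0,...,0) with a negative entry -c (1 ≤ c ≤ (p-1)/2) followed only by zeros, and f_t ≡ 0 (mod p) otherwise (in particular when all a_i are zero or when the last nonzero entry is positive). -/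
/-!
By Fermat's little theorem `x ^ (p - 1) - 1` is `-1` at `x ≡ 0` and `0` elsewhere. All integers
involved have absolute value below `p`, so congruence to `0` is equality with `0`: the inner sum is
`-1` iff `a_λ + c = 0` for some `1 ≤ c ≤ (p-1)/2`, i.e. iff `a_λ < 0`, and the product is the
indicator of `a_i = 0` for all `λ < i < t`. Hence the `λ`-th summand is `-1` exactly when `λ` is
the last nonzero index and `a_λ < 0`, and there is at most one such `λ`.
-/

open Finset

theorem ZMod.intCast_eq_zero_iff_of_abs_lt {p : ℕ} {x : ℤ} (hx : |x| < p) :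
    (x : ZMod p) = 0 ↔ x = 0 := by
  rw [ZMod.intCast_zmod_eq_zero_iff_dvd]
  exact ⟨fun h => Int.eq_zero_of_abs_lt_dvd h hx, fun h => h ▸ dvd_zero _⟩

theorem Finset.sum_ite_eq_of_subsingleton {ι M : Type*} [AddCommMonoid M] {s : Finset ι}
    {P : ι → Prop} [DecidablePred P] (c : M) (huniq : ∀ i ∈ s, ∀ j ∈ s, P i → P j → i = j) :
    ∑ i ∈ s, (if P i then c else 0) = if ∃ i ∈ s, P i then c else 0 := by
  split_ifs with h
  · obtain ⟨m, hm, hPm⟩ := h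
    rw [sum_eq_single_of_mem m hm fun i hi him => if_neg fun hPi => him (huniq i hi m hm hPi hPm),
      if_pos hPm]
  · exact sum_eq_zero fun i hi => if_neg fun hPi => h ⟨i, hi, hPi⟩

section Fermat

variable {p : ℕ} [Fact p.Prime]

theorem ZMod.pow_card_sub_one_sub_one_eq_ite (x : ZMod p) :
    x ^ (p - 1) - 1 = if x = 0 then -1 else 0 := by
  rw [ZMod.pow_card_sub_one]
  split_ifs <;> simp_all

theorem ZMod.one_sub_pow_card_sub_one_eq_ite (x : ZMod p) :
    1 - x ^ (p - 1) = if x = 0 then 1 else 0 := by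
  rw [ZMod.pow_card_sub_one]
  split_ifs <;> simp_all

theorem sum_Icc_intCast_add_pow_card_sub_one_sub_one {n : ℕ} (hn : 2 * n < p) {x : ℤ}
    (hx : |x| ≤ n) :
    ∑ c ∈ Icc 1 n, (((x : ZMod p) + c) ^ (p - 1) - 1) = if x < 0 then -1 else 0 := by
  obtain ⟨hx₁, hx₂⟩ := abs_le.1 hx
  have hzero : ∀ c ∈ Icc 1 n, ((x : ZMod p) + c = 0 ↔ (c : ℤ) = -x) := by
    intro c hc
    rw [mem_Icc] at hc
    rw [show (x : ZMod p) + c = ((x + c : ℤ) : ZMod p) by push_cast; rfl,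
      ZMod.intCast_eq_zero_iff_of_abs_lt (abs_lt.2 ⟨by omega, by omega⟩)]
    omega
  simp_rw [ZMod.pow_card_sub_one_sub_one_eq_ite]
  rw [sum_congr rfl fun c hc => if_congr (hzero c hc) rfl rfl,
    sum_ite_eq_of_subsingleton _ fun i _ j _ hi hj => by omega]
  refine if_congr ⟨fun ⟨c, hc, hcx⟩ => ?_, fun hneg => ⟨(-x).toNat, ?_, by omega⟩⟩ rfl rfl
  · rw [mem_Icc] at hc
    omega
  · rw [mem_Icc]
    omega

open Classical in
theorem prod_Ioo_one_sub_intCast_pow_card_sub_one {a : ℕ → ℤ} (ha : ∀ i, |a i| < p) (l t : ℕ) :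
    ∏ i ∈ Ioo l t, (1 - (a i : ZMod p) ^ (p - 1)) =
      if ∀ i, l < i → i < t → a i = 0 then 1 else 0 := by
  simp_rw [ZMod.one_sub_pow_card_sub_one_eq_ite, ZMod.intCast_eq_zero_iff_of_abs_lt (ha _)]
  rw [prod_boole]
  simp only [mem_Ioo, and_imp]

end Fermat

theorem eq_of_neg_and_forall_eq_zero {a : ℕ → ℤ} {t l m : ℕ} (hl : l < t) (hm : m < t)
    (hla : a l < 0 ∧ ∀ i, l < i → i < t → a i = 0)
    (hma : a m < 0 ∧ ∀ i, m < i → i < t → a i = 0) : l = m := by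
  by_contra hne
  rcases Nat.lt_or_gt_of_ne hne with h | h
  · exact hma.1.ne (hla.2 m h hm)
  · exact hla.1.ne (hma.2 l h hl)

theorem f_t_values_general (p : ℕ) [Fact (Nat.Prime p)]
    (t : ℕ) (a : ℕ → ℤ) (ha : ∀ i, |a i| ≤ ((p : ℤ) - 1) / 2) :
    ((∃ m, m < t ∧ a m < 0 ∧ ∀ i, m < i → i < t → a i = 0) →
      (∑ l ∈ Finset.range t,
        (∑ c ∈ Finset.Icc 1 ((p - 1) / 2), (((a l : ZMod p) + c) ^ (p - 1) - 1)) *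
          ∏ i ∈ Finset.Ioo l t, (1 - (a i : ZMod p) ^ (p - 1))) = -1) ∧
    ((¬ ∃ m, m < t ∧ a m < 0 ∧ ∀ i, m < i → i < t → a i = 0) →
      (∑ l ∈ Finset.range t,
        (∑ c ∈ Finset.Icc 1 ((p - 1) / 2), (((a l : ZMod p) + c) ^ (p - 1) - 1)) *
          ∏ i ∈ Finset.Ioo l t, (1 - (a i : ZMod p) ^ (p - 1))) = 0) := by
  classical
  have hp : 1 < p := (Fact.out : p.Prime).one_lt
  have ha' : ∀ i, |a i| ≤ (((p - 1) / 2 : ℕ) : ℤ) := fun i => (ha i).trans (by omega)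
  have hsummand : ∀ l,
      (∑ c ∈ Icc 1 ((p - 1) / 2), (((a l : ZMod p) + c) ^ (p - 1) - 1)) *
          ∏ i ∈ Ioo l t, (1 - (a i : ZMod p) ^ (p - 1)) =
        if a l < 0 ∧ ∀ i, l < i → i < t → a i = 0 then -1 else 0 := by
    intro l
    rw [sum_Icc_intCast_add_pow_card_sub_one_sub_one (by omega) (ha' l),
      prod_Ioo_one_sub_intCast_pow_card_sub_one (fun i => (ha' i).trans_lt (by omega)),
      ite_zero_mul_ite_zero, mul_one]
  have hsum : ∑ l ∈ range t,
      (∑ c ∈ Icc 1 ((p - 1) / 2), (((a l : ZMod p) + c) ^ (p - 1) - 1)) *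
          ∏ i ∈ Ioo l t, (1 - (a i : ZMod p) ^ (p - 1)) =
        if ∃ m, m < t ∧ a m < 0 ∧ ∀ i, m < i → i < t → a i = 0 then -1 else 0 := by
    rw [sum_congr rfl fun l _ => hsummand l, sum_ite_eq_of_subsingleton _ fun l hl m hm =>
      eq_of_neg_and_forall_eq_zero (mem_range.1 hl) (mem_range.1 hm)]
    simp only [mem_range]
  exact ⟨fun h => by rw [hsum, if_pos h], fun h => by rw [hsum, if_neg h]⟩

/-- Values of the transformation polynomial `f_t`. -/
theorem f_t_values (p : ℕ) [Fact (Nat.Prime p)] (hodd : Odd p) (hp3 : 3 ≤ p)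
    (t : ℕ) (a : ℕ → ℤ) (ha : ∀ i, |a i| ≤ ((p : ℤ) - 1) / 2) :
    ((∃ m, m < t ∧ a m < 0 ∧ ∀ i, m < i → i < t → a i = 0) →
      (∑ l ∈ Finset.range t,
        (∑ c ∈ Finset.Icc 1 ((p - 1) / 2), (((a l : ZMod p) + c) ^ (p - 1) - 1)) *
          ∏ i ∈ Finset.Ioo l t, (1 - (a i : ZMod p) ^ (p - 1))) = -1) ∧
    ((¬ ∃ m, m < t ∧ a m < 0 ∧ ∀ i, m < i → i < t → a i = 0) →
      (∑ l ∈ Finset.range t,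
        (∑ c ∈ Finset.Icc 1 ((p - 1) / 2), (((a l : ZMod p) + c) ^ (p - 1) - 1)) *
          ∏ i ∈ Finset.Ioo l t, (1 - (a i : ZMod p) ^ (p - 1))) = 0) :=
  f_t_values_general p t a ha
end

section
/- Let A = Σ_{i=0}^r a_i 2^i and B = Σ_{i=0}^r b_i 2^i with binary digits a_i, b_i ∈ {0,1}, and write AB = Σ_{i=0}^{2r+1} e_i 2^i. Then e_0 ≡ a_0 b_0 (mod 2), and for 1 ≤ t ≤ 2r+1: e_t ≡ Σ_{(l_1,...,l_t)} Π_{k=1}^{t} σ_{l_k}(a_0 b_k, a_1 b_{k-1}, ..., a_k b_0) (mod 2), where the sum is over all tuples (l_1,...,l_t) of nonnegative integers with Σ_{k=1}^t l_k 2^k = 2^t and 0 ≤ l_k ≤ k+1, and σ_l denotes the l-th elementary symmetric polynomial (with σ_0 = 1). -/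
/-!
Over `𝔽₂`, Lucas' theorem makes the `t`-th binary digit of `N` the coefficient of `X ^ 2 ^ t`
in `(1 + X) ^ N`, and Frobenius turns `(1 + X) ^ (∑ c_m 2 ^ m)` into `∏ (1 + X ^ 2 ^ m) ^ c_m`.
Write `AB = ∑ c_m 2 ^ m` with `c_m = ∑ a_i b_(m-i)`. Since `c_0 = a_0 b_0 ≤ 1`, for `t ≥ 1` the
digit `e_t` is digit `t - 1` of `∑ c_(k+1) 2 ^ k`, to whose coefficient at `X ^ 2 ^ (t-1)` the
factors with `k ≥ t` do not contribute. Expanding the remaining factors binomially gives the sum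
over tuples `l` of `∏ choose c_k l_k`, and `choose c_k l = σ_l(a_0 b_k, …, a_k b_0)` because all
these arguments are `0` or `1`.
-/

open Finset Polynomial

theorem one_add_pow_sum_mul_pow {R : Type*} [CommSemiring R] (p : ℕ) [ExpChar R p] (x : R)
    (s : Finset ℕ) (d : ℕ → ℕ) :
    (1 + x) ^ (∑ k ∈ s, d k * p ^ k) = ∏ k ∈ s, (1 + x ^ p ^ k) ^ d k := by
  rw [← prod_pow_eq_pow_sum]
  refine prod_congr rfl fun k _ => ?_
  rw [mul_comm, pow_mul, add_pow_expChar_pow, one_pow]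

theorem natCast_choose_two_pow (N s : ℕ) :
    ((N.choose (2 ^ s) : ℕ) : ZMod 2) = (N / 2 ^ s % 2 : ℕ) := by
  induction s generalizing N with
  | zero => simp
  | succ s ih =>
    have lucas := (ZMod.natCast_eq_natCast_iff _ _ _).2
      (Choose.choose_modEq_choose_mod_mul_choose_div_nat (n := N) (k := 2 ^ (s + 1)) (p := 2))
    rw [lucas, pow_succ, Nat.mul_mod_left, Nat.mul_div_cancel _ two_pos, Nat.choose_zero_right,
      one_mul, ih, Nat.div_div_eq_div_mul, mul_comm]

theorem Polynomial.coeff_mul_prod_eq_of_X_pow_dvd_sub_one {R ι : Type*} [CommRing R]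
    (p : R[X]) (s : Finset ι) (f : ι → R[X]) (n : ℕ)
    (hf : ∀ i ∈ s, X ^ (n + 1) ∣ f i - 1) :
    (p * ∏ i ∈ s, f i).coeff n = p.coeff n := by
  obtain ⟨q, hq⟩ : X ^ (n + 1) ∣ ∏ i ∈ s, f i - 1 := by
    refine prod_induction f (fun g => X ^ (n + 1) ∣ g - 1) (fun g h hg hh => ?_) (by simp) hf
    rw [show g * h - 1 = (g - 1) * h + (h - 1) by ring]
    exact dvd_add (dvd_mul_of_dvd_left hg h) hh
  rw [eq_add_of_sub_eq hq, mul_add, mul_one, coeff_add, mul_left_comm, coeff_X_pow_mul',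
    if_neg (by omega), zero_add]

theorem Polynomial.coeff_prod_one_add_X_pow_pow {R ι : Type*} [CommSemiring R] [Fintype ι]
    [DecidableEq ι] (L : ℕ) (w n : ι → ℕ) (hn : ∀ i, n i < L) (D : ℕ) :
    (∏ i, (1 + X ^ w i) ^ n i : R[X]).coeff D =
      ∑ l ∈ univ.filter (fun l : ι → Fin L => ∑ i, (l i : ℕ) * w i = D),
        ∏ i, ((n i).choose (l i) : R) := by
  have binomial : ∀ i, (1 + X ^ w i) ^ n i =
      ∑ j : Fin L, C ((n i).choose j : R) * X ^ ((j : ℕ) * w i) := by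
    intro i
    rw [add_comm, add_pow,
      Fin.sum_univ_eq_sum_range (fun j : ℕ => C ((n i).choose j : R) * X ^ (j * w i)),
      ← sum_subset (range_subset_range.2 (hn i))]
    · refine sum_congr rfl fun j _ => ?_
      rw [C_eq_natCast]
      ring
    · intro j _ hj
      rw [Nat.choose_eq_zero_of_lt (by simpa using hj)]
      simp
  simp_rw [binomial, Fintype.prod_sum, prod_mul_distrib, ← map_prod, prod_pow_eq_pow_sum,
    finsetSum_coeff, coeff_C_mul_X_pow]
  rw [sum_ite, sum_const_zero, add_zero, filter_congr fun _ _ => eq_comm]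

theorem Finset.sum_powersetCard_prod_eq_choose {ι : Type*} [DecidableEq ι] (s : Finset ι)
    (x : ι → ℕ) (hx : ∀ i ∈ s, x i ≤ 1) (l : ℕ) :
    ∑ S ∈ powersetCard l s, ∏ i ∈ S, x i = (∑ i ∈ s, x i).choose l := by
  set T := s.filter (x · = 1)
  have hT : ∑ i ∈ s, x i = #T := by
    rw [card_filter]
    exact sum_congr rfl fun i hi => by have := hx i hi; split_ifs <;> omega
  rw [hT, ← card_powersetCard, card_eq_sum_ones,
    ← sum_subset (powersetCard_mono (filter_subset (x · = 1) s))]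
  · exact sum_congr rfl fun S hS =>
      prod_eq_one fun i hi => (mem_filter.1 ((mem_powersetCard.1 hS).1 hi)).2
  · intro S hS hST
    obtain ⟨i, hiS, hiT⟩ :=
      not_subset.1 fun h => hST (mem_powersetCard.2 ⟨h, (mem_powersetCard.1 hS).2⟩)
    have his := (mem_powersetCard.1 hS).1 hiS
    have := hx i his
    simp only [mem_filter, his, true_and] at hiT
    exact prod_eq_zero hiS (by omega)

def cauchyCoeff {R : Type*} [Semiring R] (f g : ℕ → R) (m : ℕ) : R :=
  ∑ i ∈ range (m + 1), f i * g (m - i)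

theorem sum_range_mul_sum_range_eq_sum_range_cauchyCoeff {R : Type*} [CommSemiring R]
    (f g : ℕ → R) {r n : ℕ}
    (hf : ∀ j, r < j → f j = 0) (hg : ∀ j, r < j → g j = 0) (hn : 2 * r < n) (x : R) :
    (∑ i ∈ range (r + 1), f i * x ^ i) * (∑ i ∈ range (r + 1), g i * x ^ i) =
      ∑ m ∈ range n, cauchyCoeff f g m * x ^ m := by
  let P : (ℕ → R) → R[X] := fun u => ∑ i ∈ range (r + 1), C (u i) * X ^ i
  have eval_P : ∀ u, (P u).eval x = ∑ i ∈ range (r + 1), u i * x ^ i := fun u => by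
    simp [P, eval_finsetSum]
  have coeff_P : ∀ u : ℕ → R, (∀ j, r < j → u j = 0) → ∀ i, (P u).coeff i = u i := by
    intro u hu i
    simp only [P, finsetSum_coeff, coeff_C_mul_X_pow, sum_ite_eq, mem_range]
    split_ifs with h
    · rfl
    · exact (hu i (by omega)).symm
  have natDegree_P : ∀ u, (P u).natDegree ≤ r := fun u =>
    natDegree_sum_le_of_forall_le _ _ fun i hi =>
      (natDegree_C_mul_X_pow_le _ _).trans (Nat.lt_succ_iff.1 (mem_range.1 hi))
  rw [← eval_P, ← eval_P, ← eval_mul, eval_eq_sum_range' ((natDegree_mul_le.trans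
    (add_le_add (natDegree_P f) (natDegree_P g))).trans_lt (by omega : r + r < n))]
  refine sum_congr rfl fun m _ => ?_
  rw [coeff_mul, Nat.sum_antidiagonal_eq_sum_range_succ_mk, cauchyCoeff]
  simp only [coeff_P f hf, coeff_P g hg]

theorem cauchyCoeff_le {a b : ℕ → ℕ} (ha : ∀ i, a i < 2) (hb : ∀ i, b i < 2) (m : ℕ) :
    cauchyCoeff a b m ≤ m + 1 :=
  (sum_le_card_nsmul _ _ 1 fun i _ =>
    mul_le_one' (Nat.lt_succ_iff.1 (ha i)) (Nat.lt_succ_iff.1 (hb _))).trans (by simp)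

theorem sum_powersetCard_prod_eq_choose_cauchyCoeff {R : Type*} [CommSemiring R] {a b : ℕ → ℕ}
    (ha : ∀ i, a i < 2) (hb : ∀ i, b i < 2) (k l : ℕ) :
    ∑ S ∈ powersetCard l (range (k + 2)), ∏ i ∈ S, ((a i : R) * (b (k + 1 - i) : R)) =
      ((cauchyCoeff a b (k + 1)).choose l : R) := by
  rw [cauchyCoeff, ← sum_powersetCard_prod_eq_choose _ (fun i => a i * b (k + 1 - i))
    fun i _ => mul_le_one' (Nat.lt_succ_iff.1 (ha i)) (Nat.lt_succ_iff.1 (hb _))]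
  push_cast
  rfl

theorem sum_mul_sum_two_pow_eq {r : ℕ} {a b : ℕ → ℕ} (har : ∀ j, r < j → a j = 0)
    (hbr : ∀ j, r < j → b j = 0) :
    (∑ i ∈ range (r + 1), a i * 2 ^ i) * (∑ i ∈ range (r + 1), b i * 2 ^ i) =
      cauchyCoeff a b 0 + 2 * ∑ k ∈ range (2 * r + 1), cauchyCoeff a b (k + 1) * 2 ^ k := by
  rw [sum_range_mul_sum_range_eq_sum_range_cauchyCoeff a b har hbr (n := 2 * r + 2) (by omega),
    sum_range_succ', add_comm, mul_sum, pow_zero, mul_one]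
  exact congrArg _ (sum_congr rfl fun k _ => by ring)

theorem add_two_mul_div_two_pow_succ {c : ℕ} (hc : c < 2) (N s : ℕ) :
    (c + 2 * N) / 2 ^ (s + 1) = N / 2 ^ s := by
  rw [pow_succ', ← Nat.div_div_eq_div_mul, Nat.add_mul_div_left _ _ two_pos, Nat.div_eq_of_lt hc,
    zero_add]

theorem natCast_div_two_pow_mod_two_eq_coeff (d : ℕ → ℕ) {s D : ℕ} (hs : s < D) :
    (((∑ k ∈ range D, d k * 2 ^ k) / 2 ^ s % 2 : ℕ) : ZMod 2) =
      (∏ k ∈ range (s + 1), (1 + X ^ 2 ^ k) ^ d k : (ZMod 2)[X]).coeff (2 ^ s) := by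
  rw [← natCast_choose_two_pow, ← coeff_one_add_X_pow (ZMod 2), one_add_pow_sum_mul_pow 2,
    ← prod_range_mul_prod_Ico _ hs, coeff_mul_prod_eq_of_X_pow_dvd_sub_one]
  intro i hi
  have hsi : 2 ^ s + 1 ≤ 2 ^ i := Nat.pow_lt_pow_right one_lt_two (mem_Ico.1 hi).1
  have hdvd := sub_dvd_pow_sub_pow (1 + X ^ 2 ^ i : (ZMod 2)[X]) 1 (d i)
  rw [one_pow, add_sub_cancel_left] at hdvd
  exact (pow_dvd_pow X hsi).trans hdvd

theorem sum_prod_esymm_eq_coeff_prod {R : Type*} [CommSemiring R] {a b : ℕ → ℕ}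
    (ha : ∀ i, a i < 2) (hb : ∀ i, b i < 2) (s : ℕ) :
    ∑ l ∈ univ.filter (fun l : Fin (s + 1) → Fin (s + 1 + 2) =>
          (∑ k, (l k : ℕ) * 2 ^ ((k : ℕ) + 1)) = 2 ^ (s + 1) ∧ ∀ k, (l k : ℕ) ≤ k + 2),
        ∏ k, ∑ S ∈ powersetCard (l k) (range (k + 2)),
          ∏ i ∈ S, ((a i : R) * (b (k + 1 - i) : R)) =
      (∏ k ∈ range (s + 1), (1 + X ^ 2 ^ k) ^ cauchyCoeff a b (k + 1) : R[X]).coeff (2 ^ s) := by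
  simp_rw [sum_powersetCard_prod_eq_choose_cauchyCoeff ha hb]
  rw [← Fin.prod_univ_eq_prod_range (fun k => (1 + X ^ 2 ^ k) ^ cauchyCoeff a b (k + 1)),
    coeff_prod_one_add_X_pow_pow (s + 1 + 2) (fun k : Fin (s + 1) => 2 ^ (k : ℕ))
      (fun k => cauchyCoeff a b (k + 1))
      (fun k => (cauchyCoeff_le ha hb _).trans_lt (by omega)),
    ← filter_filter, sum_filter_of_ne (p := fun l : Fin (s + 1) → Fin (s + 1 + 2) =>
      ∀ k, (l k : ℕ) ≤ k + 2)]
  · refine sum_congr (filter_congr fun l _ => ?_) fun _ _ => rfl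
    simp only [pow_succ, ← mul_assoc, ← sum_mul]
    omega
  · intro l _ hne k
    by_contra hk
    refine hne (prod_eq_zero (mem_univ k) ?_)
    rw [Nat.choose_eq_zero_of_lt ((cauchyCoeff_le ha hb _).trans_lt (by omega)), Nat.cast_zero]

/-- Multiplication formula for binary digits in terms of elementary symmetric polynomials. -/
theorem binary_multiplication_formula (r : ℕ) (a b : ℕ → ℕ)
    (ha : ∀ i, a i < 2) (hb : ∀ i, b i < 2)
    (har : ∀ j, r < j → a j = 0) (hbr : ∀ j, r < j → b j = 0)
    (A B : ℕ)
    (hA : A = ∑ i ∈ Finset.range (r + 1), a i * 2 ^ i)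
    (hB : B = ∑ i ∈ Finset.range (r + 1), b i * 2 ^ i)
    (e : ℕ → ℕ) (he : ∀ t, e t = A * B / 2 ^ t % 2) :
    (e 0 : ZMod 2) = a 0 * b 0 ∧
    ∀ t, 1 ≤ t → t ≤ 2 * r + 1 →
      (e t : ZMod 2) =
        ∑ l ∈ Finset.univ.filter
            (fun l : Fin t → Fin (t + 2) =>
              (∑ k : Fin t, (l k : ℕ) * 2 ^ ((k : ℕ) + 1)) = 2 ^ t ∧
              ∀ k : Fin t, (l k : ℕ) ≤ (k : ℕ) + 2),
          ∏ k : Fin t,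
            ∑ S ∈ Finset.powersetCard (l k : ℕ) (Finset.range ((k : ℕ) + 2)),
              ∏ i ∈ S, ((a i : ZMod 2) * (b ((k : ℕ) + 1 - i) : ZMod 2)) := by
  have hc0 : cauchyCoeff a b 0 < 2 := (cauchyCoeff_le ha hb 0).trans_lt one_lt_two
  rw [hA, hB, sum_mul_sum_two_pow_eq har hbr] at he
  refine ⟨?_, fun t ht1 ht2 => ?_⟩
  · rw [he, pow_zero, Nat.div_one, Nat.add_mul_mod_self_left, Nat.mod_eq_of_lt hc0]
    simp [cauchyCoeff]
  · obtain ⟨s, rfl⟩ : ∃ s, t = s + 1 := ⟨t - 1, by omega⟩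
    rw [he, add_two_mul_div_two_pow_succ hc0, natCast_div_two_pow_mod_two_eq_coeff _ (by omega),
      sum_prod_esymm_eq_coeff_prod ha hb]
end
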